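/- Let N ≥ 1, let s : Fin N → Finset ℕ with |s i| ≤ M for every i, and consider consecutive partitions of {0, …, N−1} into batches whose page-request unions have cardinality at most M. Let g_0 = 0 < g_1 < g_2 < … be the batch boundaries produced by the greedy algorithm (each greedy batch [g_t, g_{t+1}) is extended maximally subject to |⋃_{i ∈ [g_t, g_{t+1})} s i| ≤ M), and let e_0 = 0 < e_1 < e_2 < … be the boundaries of any feasible consecutive partition. Then for every t for which both boundaries exist, g_t ≥ e_t; i.e., the t-th greedy boundary is at least as far as the t-th boundary of any feasible partition. -/
import Mathlib


/-- Pages accessed by the (consecutive) batch of vectors with indices in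
`[a, b)`: the union of the page-request sets of its vectors. -/
def batchPages {N : ℕ} (s : Fin N → Finset ℕ) (a b : ℕ) : Finset ℕ :=
  (Finset.univ.filter (fun i : Fin N => a ≤ (i : ℕ) ∧ (i : ℕ) < b)).biUnion s

/-- `bnd : Fin (k+1) → ℕ` is the boundary sequence of a feasible partition of
`{0, …, N-1}` into `k` consecutive nonempty batches: boundaries start at `0`,
end at `N`, strictly increase (so batches are nonempty), and every batch
accesses at most `M` pages. -/
def IsFeasiblePartition {N : ℕ} (s : Fin N → Finset ℕ) (M : ℕ) (k : ℕ)
    (bnd : Fin (k + 1) → ℕ) : Prop :=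
  bnd 0 = 0 ∧ bnd (Fin.last k) = N ∧ StrictMono bnd ∧
    ∀ t : Fin k, (batchPages s (bnd t.castSucc) (bnd t.succ)).card ≤ M

/-- Greedy extension: starting a batch at index `a`, extend it maximally, i.e.
take the largest `b ≤ N` with `a < b` such that the batch `[a, b)` accesses at
most `M` pages. -/
noncomputable def greedyNext {N : ℕ} (s : Fin N → Finset ℕ) (M : ℕ) (a : ℕ) : ℕ :=
  sSup {b : ℕ | a < b ∧ b ≤ N ∧ (batchPages s a b).card ≤ M}

/-- Boundaries produced by the greedy algorithm: start at `0` and repeatedly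
extend the current batch maximally subject to the memory budget `M`. -/
noncomputable def greedyBnd {N : ℕ} (s : Fin N → Finset ℕ) (M : ℕ) : ℕ → ℕ
  | 0 => 0
  | t + 1 =>
      if greedyBnd s M t < N then greedyNext s M (greedyBnd s M t) else N

lemma batchPages_mono {N : ℕ} (s : Fin N → Finset ℕ) {a a' b b' : ℕ}
    (ha : a' ≤ a) (hb : b ≤ b') : batchPages s a b ⊆ batchPages s a' b' := by
  intro x hx
  simp only [batchPages, Finset.mem_biUnion, Finset.mem_filter, Finset.mem_univ,
    true_and] at hx ⊢
  obtain ⟨i, ⟨h1, h2⟩, hx⟩ := hx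
  exact ⟨i, ⟨le_trans ha h1, lt_of_lt_of_le h2 hb⟩, hx⟩

lemma greedy_set_bdd {N M : ℕ} (s : Fin N → Finset ℕ) (a : ℕ) :
    BddAbove {b : ℕ | a < b ∧ b ≤ N ∧ (batchPages s a b).card ≤ M} :=
  ⟨N, fun _ hb => hb.2.1⟩

lemma greedyNext_mem {N M : ℕ} (s : Fin N → Finset ℕ) (hs : ∀ i, (s i).card ≤ M)
    {a : ℕ} (ha : a < N) :
    a < greedyNext s M a ∧ greedyNext s M a ≤ N := by
  have hmem : a + 1 ∈ {b : ℕ | a < b ∧ b ≤ N ∧ (batchPages s a b).card ≤ M} := by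
    refine ⟨Nat.lt_succ_self a, ha, ?_⟩
    have hsub : batchPages s a (a + 1) ⊆ s ⟨a, ha⟩ := by
      intro x hx
      simp only [batchPages, Finset.mem_biUnion, Finset.mem_filter, Finset.mem_univ,
        true_and] at hx
      obtain ⟨i, ⟨h1, h2⟩, hx⟩ := hx
      have : (i : ℕ) = a := by omega
      have : i = ⟨a, ha⟩ := Fin.ext this
      rwa [this] at hx
    exact le_trans (Finset.card_le_card hsub) (hs _)
  have := Nat.sSup_mem ⟨a + 1, hmem⟩ (greedy_set_bdd s a)
  exact ⟨this.1, this.2.1⟩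

/-- Boundary domination: the `t`-th boundary produced by the greedy algorithm
is at least as far as the `t`-th boundary of any feasible consecutive
partition. -/
theorem greedy_boundary_domination {N M : ℕ} (s : Fin N → Finset ℕ)
    (hs : ∀ i, (s i).card ≤ M)
    (k : ℕ) (e : Fin (k + 1) → ℕ) (he : IsFeasiblePartition s M k e) :
    ∀ t : Fin (k + 1), e t ≤ greedyBnd s M t := by
  obtain ⟨he0, heN, hmono, hcard⟩ := he
  intro t
  induction t using Fin.induction with
  | zero => simp [greedyBnd, he0]
  | succ t ih =>
    have hle : e t.succ ≤ N := by
      rw [← heN]; exact hmono.monotone (Fin.le_last _)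
    have hc : (t.castSucc : ℕ) = (t : ℕ) := rfl
    have hsc : (t.succ : ℕ) = (t : ℕ) + 1 := rfl
    rw [hsc, greedyBnd]
    rw [hc] at ih
    by_cases hN : greedyBnd s M (t : ℕ) < N
    · rw [if_pos hN]
      by_cases hlt : e t.succ ≤ greedyBnd s M (t : ℕ)
      · exact le_trans hlt (le_of_lt (greedyNext_mem s hs hN).1)
      · push_neg at hlt
        apply le_csSup (greedy_set_bdd s _)
        refine ⟨hlt, hle, ?_⟩
        calc (batchPages s (greedyBnd s M (t : ℕ)) (e t.succ)).card
            ≤ (batchPages s (e t.castSucc) (e t.succ)).card :=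
              Finset.card_le_card (batchPages_mono s ih le_rfl)
          _ ≤ M := hcard t
    · rw [if_neg hN]; exact hle
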